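/- For every α > 0 and every integer n ≥ 1, the α-th moment of the n-fold Kendall convolution power of δ_1 equals n; that is, ∫_{[0,∞)} x^α (δ_1^{△_α n})(dx) = n. -/

import Mathlib

open MeasureTheory Set

/-- The Pareto probability measure `π_{2α}` on `ℝ`, with density
`2α x^(-(2α+1)) 1_{(1,∞)}(x)` with respect to Lebesgue measure. -/
noncomputable def pareto (α : ℝ) : Measure ℝ :=
  volume.withDensity
    (fun x => ENNReal.ofReal (if 1 < x then 2 * α * x ^ (-(2 * α) - 1) else 0))

/-- The Kendall probability kernel `ρ_{a,b} = (1 - (a/b)^α) δ_b + (a/b)^α T_b π_{2α}`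
for `0 ≤ a ≤ b` (with `ρ_{0,0} = δ_0`). -/
noncomputable def kendallKernelLe (α a b : ℝ) : Measure ℝ :=
  if b = 0 then Measure.dirac 0
  else ENNReal.ofReal (1 - (a / b) ^ α) • Measure.dirac b
      + ENNReal.ofReal ((a / b) ^ α) • Measure.map (fun x => b * x) (pareto α)

/-- The Kendall kernel `ρ_{x,y}`, extended symmetrically. -/
noncomputable def kendallKernel (α x y : ℝ) : Measure ℝ :=
  kendallKernelLe α (min x y) (max x y)

/-- The Kendall convolution `λ △_α ν`, defined by
`(λ △_α ν)(A) = ∫∫ ρ_{x,y}(A) λ(dx) ν(dy)`. -/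
noncomputable def kendallConv (α : ℝ) (lam ν : Measure ℝ) : Measure ℝ :=
  lam.bind (fun x => ν.bind (fun y => kendallKernel α x y))

/-- The `n`-fold Kendall convolution power `ν^{△_α n}`, with `ν^{△_α 0} = δ_0`. -/
noncomputable def kendallPow (α : ℝ) (ν : Measure ℝ) : ℕ → Measure ℝ
  | 0 => Measure.dirac 0
  | n + 1 => kendallConv α (kendallPow α ν n) ν

/-- The Kendall–Williamson transform `Φ_ν(t) = ∫ (1 - (t s)^α)_+ ν(ds)`. -/
noncomputable def williamson (α : ℝ) (ν : Measure ℝ) (t : ℝ) : ℝ :=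
  ∫ s, max (1 - (t * s) ^ α) 0 ∂ν

/-!
The kernel `ρ_{x,y}` of two points `0 ≤ x, y` has `α`-th moment `x^α + y^α`: with `a = min x y`,
`b = max x y` and `r = (a/b)^α`, the atom at `b` contributes `(1 - r) b^α` and the rescaled Pareto
part `r · 2 b^α`, since `π_{2α}` has `α`-th moment `2`; and `r b^α = a^α`. Integrating, `α`-th
moments add under Kendall convolution of probability measures on `[0, ∞)`, so the `n`-th Kendall
power of `δ_1` has `n` times the `α`-th moment of `δ_1`.
-/

section Pareto

variable {α : ℝ}

lemma measurable_paretoDensity :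
    Measurable fun x : ℝ => ENNReal.ofReal (if 1 < x then 2 * α * x ^ (-(2 * α) - 1) else 0) :=
  (Measurable.ite measurableSet_Ioi (by fun_prop) measurable_const).ennreal_ofReal

lemma lintegral_rpow_pareto (hα : 0 ≤ α) {q : ℝ} (hq : q < 2 * α) :
    ∫⁻ x, ENNReal.ofReal (x ^ q) ∂(pareto α) = ENNReal.ofReal (2 * α / (2 * α - q)) := by
  have hp : -(2 * α) - 1 + q < -1 := by linarith
  have hdensity : (fun x : ℝ =>
      ENNReal.ofReal (if 1 < x then 2 * α * x ^ (-(2 * α) - 1) else 0) * ENNReal.ofReal (x ^ q))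
      = (Ioi 1).indicator fun x => ENNReal.ofReal (2 * α * x ^ (-(2 * α) - 1 + q)) := by
    funext x
    by_cases hx : 1 < x
    · rw [indicator_of_mem (show x ∈ Ioi 1 from hx), if_pos hx,
        ← ENNReal.ofReal_mul (by positivity), mul_assoc, Real.rpow_add (zero_lt_one.trans hx)]
    · simp [hx]
  rw [pareto, lintegral_withDensity_eq_lintegral_mul _ measurable_paretoDensity (by fun_prop)]
  simp only [Pi.mul_apply]
  rw [hdensity, lintegral_indicator measurableSet_Ioi,
    ← ofReal_integral_eq_lintegral_ofReal
      ((integrableOn_Ioi_rpow_of_lt hp zero_lt_one).const_mul (2 * α))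
      (ae_restrict_of_forall_mem measurableSet_Ioi fun x hx => by
        have : (0 : ℝ) < x := zero_lt_one.trans hx
        positivity),
    integral_const_mul, integral_Ioi_rpow_of_lt hp zero_lt_one, Real.one_rpow]
  congr 1
  rw [show -(2 * α) - 1 + q + 1 = -(2 * α - q) by ring, div_neg, neg_div, neg_neg, mul_one_div]

instance : SFinite (pareto α) := by
  unfold pareto
  infer_instance

lemma isProbabilityMeasure_pareto (hα : 0 < α) : IsProbabilityMeasure (pareto α) := by
  constructor
  simpa [div_self (by positivity : 2 * α ≠ 0)] using
    lintegral_rpow_pareto hα.le (q := 0) (by positivity)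

lemma ae_one_lt_pareto : ∀ᵐ x ∂(pareto α), 1 < x := by
  rw [pareto, ae_withDensity_iff measurable_paretoDensity]
  exact ae_of_all _ fun x hx => by_contra fun h => hx (by simp [h])

lemma lintegral_rpow_map_mul_pareto (hα : 0 < α) {b : ℝ} (hb : 0 ≤ b) :
    ∫⁻ z, ENNReal.ofReal (z ^ α) ∂(Measure.map (b * ·) (pareto α))
      = 2 * ENNReal.ofReal (b ^ α) := by
  rw [lintegral_map (by fun_prop) (by fun_prop)]
  calc ∫⁻ t, ENNReal.ofReal ((b * t) ^ α) ∂(pareto α)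
      = ∫⁻ t, ENNReal.ofReal (b ^ α) * ENNReal.ofReal (t ^ α) ∂(pareto α) := by
        refine lintegral_congr_ae (ae_one_lt_pareto.mono fun t ht => ?_)
        dsimp only
        rw [Real.mul_rpow hb (by linarith), ENNReal.ofReal_mul (by positivity)]
    _ = 2 * ENNReal.ofReal (b ^ α) := by
        rw [lintegral_const_mul _ (by fun_prop), lintegral_rpow_pareto hα.le (by linarith),
          show 2 * α / (2 * α - α) = 2 by field_simp; ring, ENNReal.ofReal_ofNat, mul_comm]

end Pareto

section Kernel

variable {α a b x y : ℝ}

lemma measurable_kendallKernelLe : Measurable fun p : ℝ × ℝ => kendallKernelLe α p.1 p.2 := by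
  refine Measure.measurable_of_measurable_coe _ fun s hs => ?_
  have hmap : Measurable fun b : ℝ => Measure.map (b * ·) (pareto α) s := by
    simp_rw [Measure.map_apply (measurable_const_mul _) hs]
    exact measurable_measure_prodMk_left (measurable_mul hs)
  simp only [kendallKernelLe, apply_ite (fun μ : Measure ℝ => μ s), Measure.add_apply,
    Measure.smul_apply, smul_eq_mul]
  refine Measurable.ite (measurableSet_eq_fun measurable_snd measurable_const) measurable_const ?_
  refine Measurable.add ?_ ?_
  · exact (by fun_prop : Measurable fun p : ℝ × ℝ => ENNReal.ofReal (1 - (p.1 / p.2) ^ α)).mul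
      ((Measure.measurable_coe hs).comp (Measure.measurable_dirac.comp measurable_snd))
  · exact (by fun_prop : Measurable fun p : ℝ × ℝ => ENNReal.ofReal ((p.1 / p.2) ^ α)).mul
      (hmap.comp measurable_snd)

lemma measurable_kendallKernel : Measurable fun p : ℝ × ℝ => kendallKernel α p.1 p.2 :=
  measurable_kendallKernelLe.comp
    ((measurable_fst.min measurable_snd).prodMk (measurable_fst.max measurable_snd))

lemma ae_nonneg_kendallKernelLe (hb : 0 ≤ b) : ∀ᵐ z ∂(kendallKernelLe α a b), 0 ≤ z := by
  unfold kendallKernelLe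
  split_ifs
  · exact (ae_dirac_iff measurableSet_Ici).2 le_rfl
  refine ae_add_measure_iff.2
    ⟨Measure.ae_smul_measure ((ae_dirac_iff measurableSet_Ici).2 hb) _, ?_⟩
  refine Measure.ae_smul_measure ((ae_map_iff (by fun_prop) measurableSet_Ici).2 ?_) _
  exact ae_one_lt_pareto.mono fun t ht => mul_nonneg hb (by linarith)

lemma rpow_div_mem_Icc (hα : 0 ≤ α) (ha : 0 ≤ a) (hab : a ≤ b) : (a / b) ^ α ∈ Icc 0 1 :=
  have hab' : 0 ≤ a / b := div_nonneg ha (ha.trans hab)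
  ⟨by positivity, Real.rpow_le_one hab' (div_le_one_of_le₀ hab (ha.trans hab)) hα⟩

lemma isProbabilityMeasure_kendallKernelLe (hα : 0 < α) (ha : 0 ≤ a) (hab : a ≤ b) :
    IsProbabilityMeasure (kendallKernelLe α a b) := by
  unfold kendallKernelLe
  split_ifs
  · infer_instance
  have := isProbabilityMeasure_pareto hα
  have hr := rpow_div_mem_Icc hα.le ha hab
  constructor
  rw [Measure.add_apply, Measure.smul_apply, Measure.smul_apply, measure_univ,
    (Measure.isProbabilityMeasure_map (by fun_prop)).measure_univ, smul_eq_mul, smul_eq_mul,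
    mul_one, mul_one, ← ENNReal.ofReal_add (by linarith [hr.2]) hr.1, sub_add_cancel,
    ENNReal.ofReal_one]

lemma lintegral_rpow_kendallKernelLe (hα : 0 < α) (ha : 0 ≤ a) (hab : a ≤ b) :
    ∫⁻ z, ENNReal.ofReal (z ^ α) ∂(kendallKernelLe α a b)
      = ENNReal.ofReal (a ^ α) + ENNReal.ofReal (b ^ α) := by
  obtain rfl | hb := eq_or_ne b 0
  · obtain rfl : a = 0 := le_antisymm hab ha
    simp [kendallKernelLe, Real.zero_rpow hα.ne']
  have hb' : 0 ≤ b := ha.trans hab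
  obtain ⟨hr0, hr1⟩ := rpow_div_mem_Icc hα.le ha hab
  have hbα : 0 ≤ b ^ α := by positivity
  have hab_rpow : (a / b) ^ α * b ^ α = a ^ α := by
    rw [← Real.mul_rpow (by positivity) hb', div_mul_cancel₀ _ hb]
  have hmix : (1 - (a / b) ^ α) * b ^ α + (a / b) ^ α * (2 * b ^ α) = a ^ α + b ^ α := by
    linear_combination hab_rpow
  rw [kendallKernelLe, if_neg hb, lintegral_add_measure, lintegral_smul_measure,
    lintegral_smul_measure, lintegral_dirac, lintegral_rpow_map_mul_pareto hα hb', smul_eq_mul,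
    smul_eq_mul, ← ENNReal.ofReal_mul (sub_nonneg.2 hr1), ← ENNReal.ofReal_ofNat 2,
    ← ENNReal.ofReal_mul zero_le_two, ← ENNReal.ofReal_mul hr0,
    ← ENNReal.ofReal_add (mul_nonneg (sub_nonneg.2 hr1) hbα) (by positivity), hmix,
    ENNReal.ofReal_add (by positivity) (by positivity)]

lemma ae_nonneg_kendallKernel (hy : 0 ≤ y) : ∀ᵐ z ∂(kendallKernel α x y), 0 ≤ z :=
  ae_nonneg_kendallKernelLe (le_max_of_le_right hy)

lemma isProbabilityMeasure_kendallKernel (hα : 0 < α) (hx : 0 ≤ x) (hy : 0 ≤ y) :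
    IsProbabilityMeasure (kendallKernel α x y) :=
  isProbabilityMeasure_kendallKernelLe hα (le_min hx hy) min_le_max

lemma lintegral_rpow_kendallKernel (hα : 0 < α) (hx : 0 ≤ x) (hy : 0 ≤ y) :
    ∫⁻ z, ENNReal.ofReal (z ^ α) ∂(kendallKernel α x y)
      = ENNReal.ofReal (x ^ α) + ENNReal.ofReal (y ^ α) := by
  rw [kendallKernel, lintegral_rpow_kendallKernelLe hα (le_min hx hy) min_le_max]
  rcases le_total x y with h | h
  · rw [min_eq_left h, max_eq_right h]
  · rw [min_eq_right h, max_eq_left h, add_comm]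

end Kernel

lemma ae_bind_of_ae_ae {X Y : Type*} [MeasurableSpace X] [MeasurableSpace Y] {m : Measure X}
    {f : X → Measure Y} {p : Y → Prop} (hf : AEMeasurable f m) (hp : MeasurableSet {y | p y})
    (h : ∀ᵐ x ∂m, ∀ᵐ y ∂f x, p y) : ∀ᵐ y ∂m.bind f, p y := by
  refine ae_iff.2 <| (Measure.bind_apply hp.compl hf).trans ?_
  exact (lintegral_congr_ae (h.mono fun x hx => ae_iff.1 hx)).trans lintegral_zero

section Convolution

variable {α : ℝ} {lam ν : Measure ℝ}

lemma measurable_kendallKernel_right (x : ℝ) : Measurable (kendallKernel α x) :=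
  measurable_kendallKernel.comp measurable_prodMk_left

lemma measurable_bind_kendallKernel [SFinite ν] :
    Measurable fun x => ν.bind (kendallKernel α x) := by
  refine Measure.measurable_of_measurable_coe _ fun s hs => ?_
  have hbind (x : ℝ) : ν.bind (kendallKernel α x) s = ∫⁻ y, kendallKernel α x y s ∂ν :=
    Measure.bind_apply hs (measurable_kendallKernel_right x).aemeasurable
  simp only [hbind]
  exact ((Measure.measurable_coe hs).comp measurable_kendallKernel).lintegral_prod_right'

lemma ae_nonneg_kendallConv [SFinite ν] (hν : ∀ᵐ y ∂ν, 0 ≤ y) :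
    ∀ᵐ z ∂(kendallConv α lam ν), 0 ≤ z :=
  ae_bind_of_ae_ae measurable_bind_kendallKernel.aemeasurable measurableSet_Ici <| ae_of_all _
    fun _ => ae_bind_of_ae_ae (measurable_kendallKernel_right _).aemeasurable measurableSet_Ici
      (hν.mono fun _ hy => ae_nonneg_kendallKernel hy)

lemma isProbabilityMeasure_kendallConv (hα : 0 < α) [IsProbabilityMeasure lam]
    [IsProbabilityMeasure ν] (hlam : ∀ᵐ x ∂lam, 0 ≤ x) (hν : ∀ᵐ y ∂ν, 0 ≤ y) :
    IsProbabilityMeasure (kendallConv α lam ν) :=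
  isProbabilityMeasure_bind measurable_bind_kendallKernel.aemeasurable <| hlam.mono fun _ hx =>
    isProbabilityMeasure_bind (measurable_kendallKernel_right _).aemeasurable
      (hν.mono fun _ hy => isProbabilityMeasure_kendallKernel hα hx hy)

lemma lintegral_rpow_kendallConv (hα : 0 < α) [IsProbabilityMeasure lam]
    [IsProbabilityMeasure ν] (hlam : ∀ᵐ x ∂lam, 0 ≤ x) (hν : ∀ᵐ y ∂ν, 0 ≤ y) :
    ∫⁻ z, ENNReal.ofReal (z ^ α) ∂(kendallConv α lam ν)
      = ∫⁻ x, ENNReal.ofReal (x ^ α) ∂lam + ∫⁻ y, ENNReal.ofReal (y ^ α) ∂ν := by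
  have hinner (x : ℝ) (hx : 0 ≤ x) :
      ∫⁻ z, ENNReal.ofReal (z ^ α) ∂(ν.bind (kendallKernel α x))
        = ENNReal.ofReal (x ^ α) + ∫⁻ y, ENNReal.ofReal (y ^ α) ∂ν := by
    rw [Measure.lintegral_bind (measurable_kendallKernel_right x).aemeasurable (by fun_prop),
      lintegral_congr_ae (hν.mono fun _ hy => lintegral_rpow_kendallKernel hα hx hy),
      lintegral_add_left measurable_const, lintegral_const, measure_univ, mul_one]
  rw [kendallConv,
    Measure.lintegral_bind measurable_bind_kendallKernel.aemeasurable (by fun_prop),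
    lintegral_congr_ae (hlam.mono hinner), lintegral_add_right _ measurable_const,
    lintegral_const, measure_univ, mul_one]

end Convolution

section Power

variable {α : ℝ} {ν : Measure ℝ}

lemma ae_nonneg_kendallPow [SFinite ν] (hν : ∀ᵐ y ∂ν, 0 ≤ y) (n : ℕ) :
    ∀ᵐ z ∂(kendallPow α ν n), 0 ≤ z := by
  cases n with
  | zero => exact (ae_dirac_iff measurableSet_Ici).2 le_rfl
  | succ n => exact ae_nonneg_kendallConv hν

lemma isProbabilityMeasure_kendallPow (hα : 0 < α) [IsProbabilityMeasure ν]
    (hν : ∀ᵐ y ∂ν, 0 ≤ y) (n : ℕ) : IsProbabilityMeasure (kendallPow α ν n) := by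
  induction n with
  | zero => exact Measure.dirac.isProbabilityMeasure
  | succ n ih => exact isProbabilityMeasure_kendallConv hα (ae_nonneg_kendallPow hν n) hν

lemma lintegral_rpow_kendallPow (hα : 0 < α) [IsProbabilityMeasure ν] (hν : ∀ᵐ y ∂ν, 0 ≤ y)
    (n : ℕ) :
    ∫⁻ z, ENNReal.ofReal (z ^ α) ∂(kendallPow α ν n) = n * ∫⁻ y, ENNReal.ofReal (y ^ α) ∂ν := by
  induction n with
  | zero => simp [kendallPow, Real.zero_rpow hα.ne']
  | succ n ih =>
    have := isProbabilityMeasure_kendallPow hα hν n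
    rw [kendallPow, lintegral_rpow_kendallConv hα (ae_nonneg_kendallPow hν n) hν, ih]
    push_cast
    ring

end Power

theorem kendallPow_dirac_one_moment_general
    (α : ℝ) (hα : 0 < α) (n : ℕ) :
    ∫ x in Set.Ici (0:ℝ), x ^ α ∂(kendallPow α (Measure.dirac 1) n) = n := by
  have hδ : ∀ᵐ y ∂(Measure.dirac (1 : ℝ)), 0 ≤ y :=
    (ae_dirac_iff measurableSet_Ici).2 zero_le_one
  have hnonneg := ae_nonneg_kendallPow (α := α) hδ n
  rw [Measure.restrict_eq_self_of_ae_mem (s := Ici 0) hnonneg,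
    integral_eq_lintegral_of_nonneg_ae (hnonneg.mono fun _ hx => by positivity) (by fun_prop),
    lintegral_rpow_kendallPow hα hδ, lintegral_dirac, Real.one_rpow]
  simp

/-- For every `α > 0` and integer `n ≥ 1`, the `α`-th moment of the `n`-fold Kendall
convolution power of `δ_1` equals `n`: `∫_{[0,∞)} x^α (δ_1^{△_α n})(dx) = n`. -/
theorem kendallPow_dirac_one_moment
    (α : ℝ) (hα : 0 < α) (n : ℕ) (hn : 1 ≤ n) :
    ∫ x in Set.Ici (0:ℝ), x ^ α ∂(kendallPow α (Measure.dirac 1) n) = n :=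
  kendallPow_dirac_one_moment_general α hα n
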